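/- The variance of the hashed inner product satisfies Var(⟨x,x'⟩_φ) = (1/m) · ∑_{i≠j} ( x_i² (x'_j)² + x_i x'_i x_j x'_j ). -/

import Mathlib

open Finset

/-- Sign associated to a boolean. -/
noncomputable def sgn (b : Bool) : ℝ := if b then 1 else -1

/-- Hashed inner product for fixed hash `h` and sign `ξ`. -/
noncomputable def hip {d m : ℕ} (h : Fin d → Fin m) (ξ : Fin d → Bool)
    (x x' : Fin d → ℝ) : ℝ :=
  ∑ k : Fin m,
    (∑ j ∈ Finset.univ.filter (fun j => h j = k), sgn (ξ j) * x j) *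
    (∑ j ∈ Finset.univ.filter (fun j => h j = k), sgn (ξ j) * x' j)

/-- Expectation over the uniformly random pair `(h, ξ)`. -/
noncomputable def hashExp (d m : ℕ) (f : (Fin d → Fin m) → (Fin d → Bool) → ℝ) : ℝ :=
  (∑ h : Fin d → Fin m, ∑ ξ : Fin d → Bool, f h ξ) / ((m : ℝ) ^ d * 2 ^ d)

/-!
For a fixed hash `h`, the hashed inner product is `⟨x, x'⟩ + ∑_{i ≠ j} [h i = h j] x_i x'_j ξ_i ξ_j`.
The sign monomials `ξ_i ξ_j` with `i ≠ j` have mean zero and are orthonormal up to the symmetry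
`ξ_i ξ_j = ξ_j ξ_i`, so averaging over `ξ` the variance is
`∑_{i ≠ j} [h i = h j] x_i x'_j (x_i x'_j + x_j x'_i)`; averaging over `h`, each collision
`h i = h j` has probability `1 / m`.
-/

section Signs

variable {ι : Type*}

lemma sgn_mul_self (b : Bool) : sgn b * sgn b = 1 := by cases b <;> simp [sgn]

lemma sgn_not (b : Bool) : sgn (!b) = -sgn b := by cases b <;> simp [sgn]

noncomputable def sgnPair (ξ : ι → Bool) (p : ι × ι) : ℝ := sgn (ξ p.1) * sgn (ξ p.2)

lemma sgnPair_swap (ξ : ι → Bool) (p : ι × ι) : sgnPair ξ p.swap = sgnPair ξ p :=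
  mul_comm _ _

lemma sgnPair_mul_self (ξ : ι → Bool) (p : ι × ι) : sgnPair ξ p * sgnPair ξ p = 1 := by
  unfold sgnPair
  linear_combination (sgn (ξ p.1) * sgn (ξ p.1)) * sgn_mul_self (ξ p.2) + sgn_mul_self (ξ p.1)

variable [Fintype ι] [DecidableEq ι]

lemma sum_sgn_mul_eq_zero (t : ι) {G : (ι → Bool) → ℝ}
    (hG : ∀ ξ b, G (Function.update ξ t b) = G ξ) :
    ∑ ξ : ι → Bool, sgn (ξ t) * G ξ = 0 := by
  have hflip : Function.Involutive fun ξ : ι → Bool => Function.update ξ t (!ξ t) :=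
    fun ξ => by simp
  have hneg := Fintype.sum_equiv (hflip.toPerm _) (fun ξ => sgn (ξ t) * G ξ)
    (fun ξ => -(sgn (ξ t) * G ξ)) fun ξ => by simp [hG, sgn_not]
  rw [sum_neg_distrib] at hneg
  linarith

lemma sum_sgnPair_of_mem_offDiag {p : ι × ι} (hp : p ∈ univ.offDiag) :
    ∑ ξ : ι → Bool, sgnPair ξ p = 0 :=
  sum_sgn_mul_eq_zero p.1 fun ξ b => by
    rw [Function.update_of_ne (mem_offDiag.1 hp).2.2.symm]

lemma sum_sgnPair_mul_sgnPair {p q : ι × ι} (hp : p ∈ univ.offDiag) (hq : q ∈ univ.offDiag) :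
    ∑ ξ : ι → Bool, sgnPair ξ p * sgnPair ξ q =
      if q = p ∨ q = p.swap then 2 ^ Fintype.card ι else 0 := by
  split_ifs with hpq
  · rcases hpq with rfl | rfl <;> simp [sgnPair_swap, sgnPair_mul_self]
  obtain ⟨i, j⟩ := p
  obtain ⟨k, l⟩ := q
  simp only [mem_offDiag, mem_univ, true_and, Prod.ext_iff, Prod.swap] at hp hq hpq
  -- some index of `q` occurs exactly once among `i, j, k, l`
  by_cases hk : k = i ∨ k = j
  · have hl : l ≠ i ∧ l ≠ j := by grind
    have := sum_sgn_mul_eq_zero l (G := fun ξ => sgn (ξ i) * sgn (ξ j) * sgn (ξ k))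
      fun ξ b => by
        simp only [Function.update_of_ne hl.1.symm, Function.update_of_ne hl.2.symm,
          Function.update_of_ne hq]
    simpa [sgnPair, ← this] using sum_congr rfl fun ξ _ => by ring
  · have hk : k ≠ i ∧ k ≠ j := by tauto
    have := sum_sgn_mul_eq_zero k (G := fun ξ => sgn (ξ i) * sgn (ξ j) * sgn (ξ l))
      fun ξ b => by
        simp only [Function.update_of_ne hk.1.symm, Function.update_of_ne hk.2.symm,
          Function.update_of_ne hq.symm]
    simpa [sgnPair, ← this] using sum_congr rfl fun ξ _ => by ring

lemma sum_sum_offDiag_mul_sgnPair (c : ι × ι → ℝ) :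
    ∑ ξ : ι → Bool, ∑ p ∈ univ.offDiag, c p * sgnPair ξ p = 0 := by
  rw [sum_comm]
  exact sum_eq_zero fun p hp => by rw [← mul_sum, sum_sgnPair_of_mem_offDiag hp, mul_zero]

lemma sum_sq_sum_offDiag_mul_sgnPair (c : ι × ι → ℝ) :
    ∑ ξ : ι → Bool, (∑ p ∈ univ.offDiag, c p * sgnPair ξ p) ^ 2 =
      2 ^ Fintype.card ι * ∑ p ∈ univ.offDiag, c p * (c p + c p.swap) := by
  have hpair {p : ι × ι} (hp : p ∈ univ.offDiag) :
      ∑ q ∈ univ.offDiag, c q * ∑ ξ : ι → Bool, sgnPair ξ p * sgnPair ξ q =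
        2 ^ Fintype.card ι * (c p + c p.swap) := by
    have hswap : p ≠ p.swap := fun h => (mem_offDiag.1 hp).2.2 (congrArg Prod.fst h)
    have hfilter : univ.offDiag.filter (fun q => q = p ∨ q = p.swap) = {p, p.swap} := by
      ext q
      simp only [mem_filter, mem_insert, mem_singleton, and_iff_right_iff_imp]
      rintro (rfl | rfl) <;> simpa [mem_offDiag, eq_comm] using hp
    rw [sum_congr rfl fun q hq => by rw [sum_sgnPair_mul_sgnPair hp hq]]
    simp only [mul_ite, mul_zero, ← sum_filter, hfilter, sum_pair hswap]
    ring
  calc ∑ ξ : ι → Bool, (∑ p ∈ univ.offDiag, c p * sgnPair ξ p) ^ 2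
      = ∑ p ∈ univ.offDiag, c p * ∑ q ∈ univ.offDiag, c q *
          ∑ ξ : ι → Bool, sgnPair ξ p * sgnPair ξ q := by
        simp only [sq, sum_mul_sum]
        rw [sum_comm]; refine sum_congr rfl fun p _ => ?_
        rw [sum_comm, mul_sum]; refine sum_congr rfl fun q _ => ?_
        rw [mul_sum, mul_sum]; exact sum_congr rfl fun ξ _ => by ring
    _ = _ := by
        rw [mul_sum]
        exact sum_congr rfl fun p hp => by rw [hpair hp]; ring

end Signs

section FiniteSums

variable {ι κ : Type*} [Fintype ι]

lemma sum_sum_filter_mul_sum_filter [Fintype κ] [DecidableEq κ] (f : ι → κ) (a b : ι → ℝ) :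
    ∑ k, (∑ j ∈ univ.filter (fun j => f j = k), a j) *
        (∑ j ∈ univ.filter (fun j => f j = k), b j) =
      ∑ i, ∑ j, if f i = f j then a i * b j else 0 := by
  simp only [sum_filter, sum_mul_sum]
  rw [sum_comm]
  refine sum_congr rfl fun i _ => ?_
  rw [sum_comm]
  refine sum_congr rfl fun j _ => ?_
  simp only [ite_zero_mul_ite_zero, ite_and, sum_ite_eq, mem_univ, if_true]
  exact if_congr eq_comm rfl rfl

variable [DecidableEq ι]

lemma sum_sum_eq_sum_add_sum_offDiag {M : Type*} [AddCommMonoid M] (g : ι → ι → M) :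
    ∑ i, ∑ j, g i j = ∑ i, g i i + ∑ p ∈ univ.offDiag, g p.1 p.2 := by
  rw [← sum_product' (f := g), ← diag_union_offDiag, sum_union (disjoint_diag_offDiag _), sum_diag]

lemma sum_offDiag_eq_sum_sum_erase {M : Type*} [AddCommMonoid M] (f : ι × ι → M) :
    ∑ p ∈ univ.offDiag, f p = ∑ i, ∑ j ∈ univ.erase i, f (i, j) :=
  sum_finset_product _ _ _ fun p => by simp [mem_offDiag, eq_comm]

lemma card_filter_apply_eq_apply_mul_card [Fintype κ] [DecidableEq κ] {i j : ι} (hij : i ≠ j) :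
    #(univ.filter fun h : ι → κ => h i = h j) * Fintype.card κ =
      Fintype.card κ ^ Fintype.card ι := by
  -- a colliding hash is determined by its values off `j`
  let e : {h : ι → κ // h i = h j} ≃ ({t // t ≠ j} → κ) :=
    { toFun h t := h.1 t
      invFun g := ⟨fun t => if ht : t = j then g ⟨i, hij⟩ else g ⟨t, ht⟩, by simp [hij]⟩
      left_inv h := by
        ext t
        by_cases ht : t = j
        · subst ht; simp [h.2]
        · simp [ht]
      right_inv g := by ext t; simp [t.2] }
  rw [← Fintype.card_subtype, Fintype.card_congr e, Fintype.card_fun, Fintype.card_subtype_compl,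
    Fintype.card_subtype_eq, ← pow_succ, Nat.sub_add_cancel (Fintype.card_pos_iff.2 ⟨j⟩)]

end FiniteSums

section HashKernel

variable {d m : ℕ}

noncomputable def hashCoeff (h : Fin d → Fin m) (x x' : Fin d → ℝ) (p : Fin d × Fin d) : ℝ :=
  if h p.1 = h p.2 then x p.1 * x' p.2 else 0

lemma hip_eq_sum_add_sum_offDiag (h : Fin d → Fin m) (ξ : Fin d → Bool) (x x' : Fin d → ℝ) :
    hip h ξ x x' =
      ∑ i, x i * x' i + ∑ p ∈ univ.offDiag, hashCoeff h x x' p * sgnPair ξ p := by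
  rw [hip, sum_sum_filter_mul_sum_filter, sum_sum_eq_sum_add_sum_offDiag]
  congr 1
  · refine sum_congr rfl fun i _ => ?_
    rw [if_pos rfl]
    linear_combination (x i * x' i) * sgn_mul_self (ξ i)
  · refine sum_congr rfl fun p _ => ?_
    unfold hashCoeff sgnPair
    split_ifs <;> ring

lemma sum_hip (h : Fin d → Fin m) (x x' : Fin d → ℝ) :
    ∑ ξ : Fin d → Bool, hip h ξ x x' = 2 ^ d * ∑ i, x i * x' i := by
  simp [hip_eq_sum_add_sum_offDiag, sum_add_distrib, sum_sum_offDiag_mul_sgnPair]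

lemma sum_hip_sq (h : Fin d → Fin m) (x x' : Fin d → ℝ) :
    ∑ ξ : Fin d → Bool, hip h ξ x x' ^ 2 =
      2 ^ d * ((∑ i, x i * x' i) ^ 2 + ∑ p ∈ univ.offDiag,
        hashCoeff h x x' p * (hashCoeff h x x' p + hashCoeff h x x' p.swap)) := by
  have hsq (ξ : Fin d → Bool) : hip h ξ x x' ^ 2 =
      (∑ i, x i * x' i) ^ 2 +
        2 * (∑ i, x i * x' i) * ∑ p ∈ univ.offDiag, hashCoeff h x x' p * sgnPair ξ p +
        (∑ p ∈ univ.offDiag, hashCoeff h x x' p * sgnPair ξ p) ^ 2 := by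
    rw [hip_eq_sum_add_sum_offDiag]; ring
  simp only [hsq, sum_add_distrib, ← mul_sum, sum_sum_offDiag_mul_sgnPair,
    sum_sq_sum_offDiag_mul_sgnPair, sum_const, card_univ, Fintype.card_pi, Fintype.card_bool,
    prod_const, Fintype.card_fin, nsmul_eq_mul, Nat.cast_pow, Nat.cast_ofNat, mul_zero, add_zero]
  ring

lemma sum_sum_hashCoeff_mul (hm : m ≠ 0) (x x' : Fin d → ℝ) :
    ∑ h : Fin d → Fin m, ∑ p ∈ univ.offDiag,
        hashCoeff h x x' p * (hashCoeff h x x' p + hashCoeff h x x' p.swap) =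
      (m : ℝ) ^ d / m * ∑ p ∈ univ.offDiag,
        (x p.1 ^ 2 * x' p.2 ^ 2 + x p.1 * x' p.1 * x p.2 * x' p.2) := by
  rw [sum_comm, mul_sum]
  refine sum_congr rfl fun p hp => ?_
  have hcoeff (h : Fin d → Fin m) :
      hashCoeff h x x' p * (hashCoeff h x x' p + hashCoeff h x x' p.swap) =
        if h p.1 = h p.2 then x p.1 ^ 2 * x' p.2 ^ 2 + x p.1 * x' p.1 * x p.2 * x' p.2
        else 0 := by
    simp only [hashCoeff, Prod.fst_swap, Prod.snd_swap]
    split_ifs with h₁ h₂ <;> first | exact absurd h₁.symm h₂ | ring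
  have hcard := card_filter_apply_eq_apply_mul_card (κ := Fin m) (mem_offDiag.1 hp).2.2
  simp only [hcoeff, ← sum_filter, sum_const, nsmul_eq_mul]
  rw [Fintype.card_fin, Fintype.card_fin] at hcard
  congr 1
  rw [eq_div_iff (Nat.cast_ne_zero.2 hm)]
  exact_mod_cast hcard

lemma hashExp_eq_of_sum_eq (hm : m ≠ 0) {f : (Fin d → Fin m) → (Fin d → Bool) → ℝ} {c : ℝ}
    (hf : ∑ h, ∑ ξ, f h ξ = (m : ℝ) ^ d * 2 ^ d * c) : hashExp d m f = c := by
  rw [hashExp, hf, mul_div_cancel_left₀]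
  have : (m : ℝ) ≠ 0 := Nat.cast_ne_zero.2 hm
  positivity

end HashKernel

/-- Variance of the hashed inner product:
`Var(⟨x,x'⟩_φ) = (1/m) ∑_{i≠j} (x_i² x'_j² + x_i x'_i x_j x'_j)`. -/
theorem hash_kernel_variance (d m : ℕ) (hm : 0 < m) (x x' : Fin d → ℝ) :
    hashExp d m (fun h ξ => (hip h ξ x x') ^ 2) -
        (hashExp d m (fun h ξ => hip h ξ x x')) ^ 2 =
      (1 / (m : ℝ)) *
        ∑ i : Fin d, ∑ j ∈ Finset.univ.erase i,
          (x i ^ 2 * x' j ^ 2 + x i * x' i * x j * x' j) := by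
  have hmean : hashExp d m (fun h ξ => hip h ξ x x') = ∑ i, x i * x' i :=
    hashExp_eq_of_sum_eq hm.ne' (by simp [sum_hip, mul_assoc])
  have hsecond : hashExp d m (fun h ξ => hip h ξ x x' ^ 2) =
      (∑ i, x i * x' i) ^ 2 + 1 / m * ∑ p ∈ univ.offDiag,
        (x p.1 ^ 2 * x' p.2 ^ 2 + x p.1 * x' p.1 * x p.2 * x' p.2) := by
    refine hashExp_eq_of_sum_eq hm.ne' ?_
    simp only [sum_hip_sq, ← mul_sum, sum_add_distrib, sum_sum_hashCoeff_mul hm.ne', sum_const,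
      card_univ, Fintype.card_pi, Fintype.card_fin, prod_const, nsmul_eq_mul, Nat.cast_pow]
    field_simp
  rw [hmean, hsecond, sum_offDiag_eq_sum_sum_erase]
  ring
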